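/- arXiv:2509.11073 — 6 statements merged into one kernel-verified Lean document; each statement's English description precedes it below -/
import Mathlib

section
/- For the dual change of variables f, one has f(t)/√t → 2^{1/4} as t → +∞. -/
open Real Filter Topology Set

lemma sqrt_half : Real.sqrt (1/2) = Real.sqrt 2 / 2 := by
  rw [show (1:ℝ)/2 = 2/4 by norm_num, Real.sqrt_div (by norm_num),
    show (4:ℝ) = 2^2 by norm_num, Real.sqrt_sq (by norm_num)]

noncomputable def Fc (y : ℝ) : ℝ :=
  y * Real.sqrt (1 + 2 * y ^ 2) / 2 + Real.arsinh (Real.sqrt 2 * y) / (2 * Real.sqrt 2)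

lemma Fc_hasDerivAt (y : ℝ) : HasDerivAt Fc (Real.sqrt (1 + 2 * y ^ 2)) y := by
  have hpos : (0:ℝ) < 1 + 2 * y ^ 2 := by positivity
  have hs : (0:ℝ) < Real.sqrt (1 + 2 * y ^ 2) := Real.sqrt_pos.2 hpos
  have hsq : Real.sqrt (1 + 2 * y ^ 2) ^ 2 = 1 + 2 * y ^ 2 := Real.sq_sqrt hpos.le
  have h1 : HasDerivAt (fun y : ℝ => 1 + 2 * y ^ 2) (4 * y) y := by
    have := ((hasDerivAt_pow 2 y).const_mul 2).const_add 1
    exact this.congr_deriv (by ring)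
  have h2 : HasDerivAt (fun y : ℝ => Real.sqrt (1 + 2 * y ^ 2))
      (4 * y / (2 * Real.sqrt (1 + 2 * y ^ 2))) y := h1.sqrt hpos.ne'
  have h3 : HasDerivAt (fun y : ℝ => y * Real.sqrt (1 + 2 * y ^ 2) / 2)
      ((1 * Real.sqrt (1 + 2 * y ^ 2) + y * (4 * y / (2 * Real.sqrt (1 + 2 * y ^ 2)))) / 2) y :=
    ((hasDerivAt_id y).mul h2).div_const 2
  have h4 : HasDerivAt (fun y : ℝ => Real.arsinh (Real.sqrt 2 * y) / (2 * Real.sqrt 2))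
      ((Real.sqrt (1 + (Real.sqrt 2 * y) ^ 2))⁻¹ * Real.sqrt 2 / (2 * Real.sqrt 2)) y := by
    have hi : HasDerivAt (fun y : ℝ => Real.sqrt 2 * y) (Real.sqrt 2) y := by
      simpa using (hasDerivAt_id y).const_mul (Real.sqrt 2)
    exact ((Real.hasDerivAt_arsinh _).comp y hi).div_const _
  have htot := h3.add h4
  refine htot.congr_deriv (Eq.symm ?_)
  have h2' : (Real.sqrt 2 * y) ^ 2 = 2 * y ^ 2 := by
    rw [mul_pow, Real.sq_sqrt (by norm_num : (0:ℝ) ≤ 2)]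
  rw [h2']
  have h2pos : (0:ℝ) < Real.sqrt 2 := by positivity
  have hc : (Real.sqrt (1 + 2 * y ^ 2))⁻¹ * Real.sqrt 2 / (2 * Real.sqrt 2)
      = (Real.sqrt (1 + 2 * y ^ 2))⁻¹ / 2 := by
    field_simp
  rw [hc]
  field_simp
  nlinarith [hsq, hs]

lemma Fc_strictMono : StrictMono Fc := by
  apply strictMono_of_deriv_pos
  intro x
  rw [(Fc_hasDerivAt x).deriv]
  positivity

lemma Fc_zero : Fc 0 = 0 := by simp [Fc]

/-- For the dual change of variables `f`, one has `f(t)/√t → 2^(1/4)` as `t → +∞`. -/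
theorem stmt4 (f : ℝ → ℝ) (h0 : f 0 = 0)
    (hderiv : ∀ t : ℝ, 0 ≤ t → HasDerivAt f (1 / Real.sqrt (1 + 2 * f t ^ 2)) t)
    (hodd : ∀ t : ℝ, f (-t) = - f t) :
    Tendsto (fun t : ℝ => f t / Real.sqrt t) atTop (𝓝 ((2:ℝ) ^ ((1:ℝ)/4))) := by
  have key : ∀ t : ℝ, 0 ≤ t → Fc (f t) = t := by
    intro t ht
    have hG : ∀ x ∈ Set.uIcc 0 t, HasDerivAt (fun s => Fc (f s)) 1 x := by
      intro x hx
      rw [Set.uIcc_of_le ht] at hx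
      have hx0 : 0 ≤ x := hx.1
      have hs : (0:ℝ) < Real.sqrt (1 + 2 * f x ^ 2) := Real.sqrt_pos.2 (by positivity)
      have := (Fc_hasDerivAt (f x)).comp x (hderiv x hx0)
      refine this.congr_deriv (Eq.symm ?_)
      field_simp
    have := intervalIntegral.integral_eq_sub_of_hasDerivAt hG
      (intervalIntegrable_const (c := (1:ℝ)))
    simp [h0, Fc_zero] at this
    linarith [this]
  have hfTop : Tendsto f atTop atTop := by
    rw [tendsto_atTop]
    intro b
    filter_upwards [eventually_ge_atTop (max 0 (Fc b))] with t ht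
    have ht0 : 0 ≤ t := le_trans (le_max_left _ _) ht
    have : Fc b ≤ Fc (f t) := by rw [key t ht0]; exact le_trans (le_max_right _ _) ht
    exact Fc_strictMono.le_iff_le.mp this
  have hA : Tendsto (fun y : ℝ => Fc y / y ^ 2) atTop (𝓝 (Real.sqrt 2 / 2)) := by
    have l0 : Tendsto (fun y : ℝ => 1 / (4 * y ^ 2)) atTop (𝓝 0) := by
      have h4 : Tendsto (fun y : ℝ => 4 * y ^ 2) atTop atTop :=
        (tendsto_pow_atTop (by norm_num)).const_mul_atTop (by norm_num)
      exact (tendsto_inv_atTop_zero.comp h4).congr (fun y => by simp [Function.comp, one_div])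
    have l1 : Tendsto (fun y : ℝ => 1 / (4 * y ^ 2) + 1 / 2) atTop (𝓝 ((1:ℝ)/2)) := by
      have := l0.add (tendsto_const_nhds (α := ℝ) (x := (1:ℝ)/2) (f := atTop))
      simpa using this
    have hT1 : Tendsto (fun y : ℝ => Real.sqrt (1 / (4 * y ^ 2) + 1 / 2)) atTop
        (𝓝 (Real.sqrt 2 / 2)) := by
      have := (Real.continuous_sqrt.tendsto _).comp l1
      rw [sqrt_half] at this
      exact this
    have hT1' : Tendsto (fun y : ℝ => Real.sqrt (1 + 2 * y ^ 2) / (2 * y)) atTop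
        (𝓝 (Real.sqrt 2 / 2)) := by
      apply hT1.congr'
      filter_upwards [eventually_gt_atTop (0:ℝ)] with y hy
      rw [show 1 / (4 * y ^ 2) + 1 / 2 = (1 + 2 * y ^ 2) / (4 * y ^ 2) by field_simp; ring]
      rw [Real.sqrt_div (by positivity), show (4:ℝ) * y ^ 2 = (2 * y) ^ 2 by ring,
        Real.sqrt_sq (by positivity)]
    have hT2 : Tendsto (fun y : ℝ => Real.arsinh (Real.sqrt 2 * y) / (2 * Real.sqrt 2 * y ^ 2))
        atTop (𝓝 0) := by
      apply squeeze_zero' (g := fun y : ℝ => 1 / (2 * y))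
      · filter_upwards [eventually_gt_atTop (0:ℝ)] with y hy
        have h0' : 0 ≤ Real.arsinh (Real.sqrt 2 * y) := Real.arsinh_nonneg_iff.2 (by positivity)
        positivity
      · filter_upwards [eventually_gt_atTop (0:ℝ)] with y hy
        have harsinh : Real.arsinh (Real.sqrt 2 * y) ≤ Real.sqrt 2 * y := by
          calc Real.arsinh (Real.sqrt 2 * y) ≤ Real.arsinh (Real.sinh (Real.sqrt 2 * y)) := by
                rw [Real.arsinh_le_arsinh]
                exact Real.self_le_sinh_iff.2 (by positivity)
            _ = Real.sqrt 2 * y := Real.arsinh_sinh _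
        have h2pos : (0:ℝ) < Real.sqrt 2 := by positivity
        rw [div_le_div_iff₀ (by positivity) (by positivity)]
        calc Real.arsinh (Real.sqrt 2 * y) * (2 * y) ≤ Real.sqrt 2 * y * (2 * y) :=
              mul_le_mul_of_nonneg_right harsinh (by positivity)
          _ = 1 * (2 * Real.sqrt 2 * y ^ 2) := by ring
      · have h2 : Tendsto (fun y : ℝ => 2 * y) atTop atTop :=
          tendsto_id.const_mul_atTop (by norm_num)
        exact (tendsto_inv_atTop_zero.comp h2).congr (fun y => by simp [Function.comp, one_div])
    have hsum := hT1'.add hT2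
    rw [add_zero] at hsum
    apply hsum.congr'
    filter_upwards [eventually_gt_atTop (0:ℝ)] with y hy
    have h2pos : (0:ℝ) < Real.sqrt 2 := by positivity
    unfold Fc
    field_simp
  have hB : Tendsto (fun y : ℝ => (Real.sqrt (Fc y / y ^ 2))⁻¹) atTop
      (𝓝 ((Real.sqrt (Real.sqrt 2 / 2))⁻¹)) :=
    ((Real.continuous_sqrt.tendsto _).comp hA).inv₀ (by positivity)
  have hval : (Real.sqrt (Real.sqrt 2 / 2))⁻¹ = (2:ℝ) ^ ((1:ℝ)/4) := by
    have e1 : Real.sqrt 2 / 2 = ((2:ℝ)⁻¹) ^ ((1:ℝ)/2) := by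
      rw [← Real.sqrt_eq_rpow, show (2:ℝ)⁻¹ = 2/4 by norm_num, Real.sqrt_div (by norm_num),
        show (4:ℝ) = 2^2 by norm_num, Real.sqrt_sq (by norm_num)]
    rw [e1, ← Real.sqrt_eq_rpow, Real.sqrt_inv, Real.sqrt_inv, inv_inv, Real.sqrt_eq_rpow, Real.sqrt_eq_rpow,
      ← Real.rpow_mul (by norm_num : (0:ℝ) ≤ 2)]
    norm_num
  have hφ : Tendsto (fun y : ℝ => y / Real.sqrt (Fc y)) atTop
      (𝓝 ((Real.sqrt (Real.sqrt 2 / 2))⁻¹)) := by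
    apply hB.congr'
    filter_upwards [eventually_gt_atTop (0:ℝ)] with y hy
    have hFy : 0 < Fc y := by rw [← Fc_zero]; exact Fc_strictMono hy
    rw [Real.sqrt_div hFy.le, Real.sqrt_sq hy.le, inv_div]
  rw [← hval]
  apply (hφ.comp hfTop).congr'
  filter_upwards [eventually_ge_atTop (0:ℝ)] with t ht
  simp only [Function.comp]
  rw [key t ht]
end

section
/- For the dual change of variables f, one has f(t)/2 ≤ t f'(t) ≤ f(t) for all t > 0. -/
open Real Filter Topology Set

/-- For the dual change of variables `f`, one has `f(t)/2 ≤ t f'(t) ≤ f(t)` for `t > 0`. -/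
theorem stmt5 (f : ℝ → ℝ) (h0 : f 0 = 0)
    (hderiv : ∀ t : ℝ, 0 ≤ t → HasDerivAt f (1 / Real.sqrt (1 + 2 * f t ^ 2)) t)
    (hodd : ∀ t : ℝ, f (-t) = - f t) :
    ∀ t : ℝ, 0 < t → f t / 2 ≤ t * deriv f t ∧ t * deriv f t ≤ f t := by
  have hupos : ∀ t : ℝ, (0:ℝ) < 1 + 2 * f t ^ 2 := fun t => by positivity
  have hspos : ∀ t : ℝ, (0:ℝ) < Real.sqrt (1 + 2 * f t ^ 2) :=
    fun t => Real.sqrt_pos.2 (hupos t)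
  have hsq : ∀ t : ℝ, Real.sqrt (1 + 2 * f t ^ 2) ^ 2 = 1 + 2 * f t ^ 2 :=
    fun t => Real.sq_sqrt (hupos t).le
  set g : ℝ → ℝ := fun t => f t * Real.sqrt (1 + 2 * f t ^ 2) with hg_def
  have hg : ∀ t : ℝ, 0 ≤ t →
      HasDerivAt g ((1 + 4 * f t ^ 2) / (1 + 2 * f t ^ 2)) t := by
    intro t ht
    have hf := hderiv t ht
    have hu : HasDerivAt (fun t => 1 + 2 * f t ^ 2)
        (2 * (2 * f t ^ 1 * (1 / Real.sqrt (1 + 2 * f t ^ 2)))) t :=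
      ((hf.pow 2).const_mul 2).const_add 1
    have hs := hu.sqrt (ne_of_gt (hupos t))
    have hmul := hf.mul hs
    refine hmul.congr_deriv ?_
    have h1 := hsq t
    have h2 := (hspos t).ne'
    field_simp
    nlinarith [hspos t, h1]
  have hcont : ContinuousOn g (Ici 0) := fun x hx =>
    ((hg x hx).continuousAt).continuousWithinAt
  -- t ≤ g t on Ici 0
  have hd1 : ∀ x : ℝ, 0 < x →
      HasDerivAt (fun t => g t - t) ((1 + 4 * f x ^ 2) / (1 + 2 * f x ^ 2) - 1) x := by
    intro x hx
    exact (hg x hx.le).sub (hasDerivAt_id x)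
  have hd2 : ∀ x : ℝ, 0 < x →
      HasDerivAt (fun t => 2 * t - g t) (2 - (1 + 4 * f x ^ 2) / (1 + 2 * f x ^ 2)) x := by
    intro x hx
    have := ((hasDerivAt_id x).const_mul 2).sub (hg x hx.le)
    rw [mul_one] at this
    exact this
  have hcont1 : ContinuousOn (fun t => g t - t) (Ici 0) := fun x hx =>
    (((hg x hx).continuousAt).sub continuousAt_id).continuousWithinAt
  have hcont2 : ContinuousOn (fun t => 2 * t - g t) (Ici 0) := fun x hx =>
    ((continuousAt_const.mul continuousAt_id).sub ((hg x hx).continuousAt)).continuousWithinAt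
  have hmono1 : MonotoneOn (fun t => g t - t) (Ici 0) := by
    apply monotoneOn_of_deriv_nonneg (convex_Ici 0) hcont1
    · intro x hx
      rw [interior_Ici] at hx
      exact (hd1 x hx).differentiableAt.differentiableWithinAt
    · intro x hx
      rw [interior_Ici] at hx
      rw [(hd1 x hx).deriv, sub_nonneg, le_div_iff₀ (hupos x)]
      nlinarith [sq_nonneg (f x)]
  have hmono2 : MonotoneOn (fun t => 2 * t - g t) (Ici 0) := by
    apply monotoneOn_of_deriv_nonneg (convex_Ici 0) hcont2
    · intro x hx
      rw [interior_Ici] at hx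
      exact (hd2 x hx).differentiableAt.differentiableWithinAt
    · intro x hx
      rw [interior_Ici] at hx
      rw [(hd2 x hx).deriv, sub_nonneg, div_le_iff₀ (hupos x)]
      nlinarith [sq_nonneg (f x)]
  intro t ht
  have hg0 : g 0 = 0 := by simp [hg_def, h0]
  have h1 : t ≤ g t := by
    have := hmono1 (self_mem_Ici) (mem_Ici.2 ht.le) ht.le
    simp only [hg0] at this
    linarith
  have h2 : g t ≤ 2 * t := by
    have := hmono2 (self_mem_Ici) (mem_Ici.2 ht.le) ht.le
    simp only [hg0] at this
    linarith
  have hd : deriv f t = 1 / Real.sqrt (1 + 2 * f t ^ 2) := (hderiv t ht.le).deriv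
  rw [hd]
  have hs := hspos t
  constructor
  · rw [div_le_iff₀ (by norm_num : (0:ℝ) < 2), mul_one_div, div_mul_eq_mul_div,
      le_div_iff₀ hs]
    calc f t * Real.sqrt (1 + 2 * f t ^ 2) = g t := rfl
      _ ≤ 2 * t := h2
      _ = t * 2 := by ring
  · rw [mul_one_div, div_le_iff₀ hs]
    exact h1
end

section
/- For the dual change of variables f, one has f(t)²/2 ≤ t f(t) f'(t) ≤ f(t)² for all t ≥ 0. -/
open Real Filter Topology Set

/-- For the dual change of variables `f`, one has `f(t)²/2 ≤ t f(t) f'(t) ≤ f(t)²` for `t ≥ 0`. -/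
theorem stmt6 (f : ℝ → ℝ) (h0 : f 0 = 0)
    (hderiv : ∀ t : ℝ, 0 ≤ t → HasDerivAt f (1 / Real.sqrt (1 + 2 * f t ^ 2)) t)
    (hodd : ∀ t : ℝ, f (-t) = - f t) :
    ∀ t : ℝ, 0 ≤ t →
      f t ^ 2 / 2 ≤ t * f t * deriv f t ∧ t * f t * deriv f t ≤ f t ^ 2 := by
  have hq : ∀ t : ℝ, (0:ℝ) < 1 + 2 * f t ^ 2 := by
    intro t; positivity
  have hs : ∀ t : ℝ, (0:ℝ) < Real.sqrt (1 + 2 * f t ^ 2) := fun t =>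
    Real.sqrt_pos.2 (hq t)
  have hcont : ContinuousOn f (Ici 0) := fun x hx =>
    (hderiv x hx).continuousAt.continuousWithinAt
  have hmono : MonotoneOn f (Ici 0) := by
    apply monotoneOn_of_deriv_nonneg (convex_Ici 0) hcont
    · intro x hx
      rw [interior_Ici] at hx
      exact (hderiv x hx.le).differentiableAt.differentiableWithinAt
    · intro x hx
      rw [interior_Ici] at hx
      rw [(hderiv x hx.le).deriv]
      positivity
  have hf0 : ∀ t : ℝ, 0 ≤ t → 0 ≤ f t := by
    intro t ht
    have := hmono (self_mem_Ici) ht ht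
    rwa [h0] at this
  set g : ℝ → ℝ := fun t => 2 * t - f t * Real.sqrt (1 + 2 * f t ^ 2) with hg
  have hgd : ∀ t : ℝ, 0 ≤ t → HasDerivAt g (1 / (1 + 2 * f t ^ 2)) t := by
    intro t ht
    have hf := hderiv t ht
    have hinner : HasDerivAt (fun x => 1 + 2 * f x ^ 2)
        (2 * (2 * f t ^ 1 * (1 / Real.sqrt (1 + 2 * f t ^ 2)))) t :=
      ((hf.pow 2).const_mul 2).const_add 1
    have hsq : HasDerivAt (fun x => Real.sqrt (1 + 2 * f x ^ 2))
        (1 / (2 * Real.sqrt (1 + 2 * f t ^ 2)) *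
          (2 * (2 * f t ^ 1 * (1 / Real.sqrt (1 + 2 * f t ^ 2))))) t :=
      (Real.hasDerivAt_sqrt (ne_of_gt (hq t))).comp t hinner
    have hprod := hf.mul hsq
    have h2t : HasDerivAt (fun x : ℝ => 2 * x) 2 t := by
      simpa using (hasDerivAt_id t).const_mul (2:ℝ)
    have := h2t.sub hprod
    refine this.congr_deriv ?_
    symm
    have hss : Real.sqrt (1 + 2 * f t ^ 2) * Real.sqrt (1 + 2 * f t ^ 2)
        = 1 + 2 * f t ^ 2 := Real.mul_self_sqrt (hq t).le
    field_simp
    nlinarith [hs t, hq t, hss]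
  have hgmono : MonotoneOn g (Ici 0) := by
    apply monotoneOn_of_deriv_nonneg (convex_Ici 0)
      (fun x hx => (hgd x hx).continuousAt.continuousWithinAt)
    · intro x hx
      rw [interior_Ici] at hx
      exact (hgd x hx.le).differentiableAt.differentiableWithinAt
    · intro x hx
      rw [interior_Ici] at hx
      rw [(hgd x hx.le).deriv]
      positivity
  have hg0 : g 0 = 0 := by simp [hg, h0]
  have hkey : ∀ t : ℝ, 0 ≤ t → f t * Real.sqrt (1 + 2 * f t ^ 2) ≤ 2 * t := by
    intro t ht
    have := hgmono self_mem_Ici ht ht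
    rw [hg0] at this
    simp only [hg] at this
    linarith
  have hsmono : ∀ a b : ℝ, 0 ≤ a → a ≤ b →
      Real.sqrt (1 + 2 * f a ^ 2) ≤ Real.sqrt (1 + 2 * f b ^ 2) := by
    intro a b ha hab
    apply Real.sqrt_le_sqrt
    have hfa := hf0 a ha
    have hfab := hmono (show a ∈ Ici (0:ℝ) from ha) (show b ∈ Ici (0:ℝ) from ha.trans hab) hab
    nlinarith
  intro t ht
  rw [(hderiv t ht).deriv]
  rcases eq_or_lt_of_le ht with h | htpos
  · simp [← h, h0]
  have hst := hs t
  have hfnn := hf0 t ht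
  constructor
  · have hk := hkey t ht
    have heq : t * f t * (1 / Real.sqrt (1 + 2 * f t ^ 2)) =
        t * f t / Real.sqrt (1 + 2 * f t ^ 2) := by ring
    rw [heq, le_div_iff₀ hst]
    nlinarith [mul_le_mul_of_nonneg_left hk hfnn]
  · obtain ⟨c, hc, hceq⟩ := exists_hasDerivAt_eq_slope f
      (fun x => 1 / Real.sqrt (1 + 2 * f x ^ 2)) htpos
      (hcont.mono (Icc_subset_Ici_self))
      (fun x hx => hderiv x hx.1.le)
    have hsc := hs c
    have hsle := hsmono c t hc.1.le hc.2.le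
    have hft : f t * Real.sqrt (1 + 2 * f c ^ 2) = t := by
      rw [h0, sub_zero] at hceq
      field_simp at hceq
      linarith
    have h1 : t / Real.sqrt (1 + 2 * f t ^ 2) ≤ f t := by
      rw [div_le_iff₀ hst]
      calc t = f t * Real.sqrt (1 + 2 * f c ^ 2) := hft.symm
        _ ≤ f t * Real.sqrt (1 + 2 * f t ^ 2) := mul_le_mul_of_nonneg_left hsle hfnn
    have h2 : t * f t * (1 / Real.sqrt (1 + 2 * f t ^ 2)) =
        f t * (t / Real.sqrt (1 + 2 * f t ^ 2)) := by ring
    rw [h2]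
    nlinarith [mul_le_mul_of_nonneg_left h1 hfnn]
end

section
/- For the dual change of variables f, one has |f(t)| ≤ 2^{1/4} |t|^{1/2} for all t ∈ ℝ. -/
open Real Filter Topology Set

/-- For the dual change of variables `f`, one has `|f(t)| ≤ 2^(1/4) |t|^(1/2)` for all `t`. -/
theorem stmt7 (f : ℝ → ℝ) (h0 : f 0 = 0)
    (hderiv : ∀ t : ℝ, 0 ≤ t → HasDerivAt f (1 / Real.sqrt (1 + 2 * f t ^ 2)) t)
    (hodd : ∀ t : ℝ, f (-t) = - f t) :
    ∀ t : ℝ, |f t| ≤ (2:ℝ) ^ ((1:ℝ)/4) * |t| ^ ((1:ℝ)/2) := by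
  have key : ∀ t : ℝ, 0 ≤ t → f t ^ 2 ≤ Real.sqrt 2 * t := by
    intro t ht
    set g' : ℝ → ℝ := fun x => (2:ℝ) * f x ^ 1 * (1 / Real.sqrt (1 + 2 * f x ^ 2)) with hg'
    have hgderiv : ∀ x ∈ Icc (0:ℝ) t,
        HasDerivWithinAt (fun x => f x ^ 2) (g' x) (Icc (0:ℝ) t) x := by
      intro x hx
      exact ((hderiv x hx.1).pow 2).hasDerivWithinAt
    have hbound : ∀ x ∈ Icc (0:ℝ) t, ‖g' x‖ ≤ Real.sqrt 2 := by
      intro x hx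
      have hpos : (0:ℝ) < Real.sqrt (1 + 2 * f x ^ 2) := by
        apply Real.sqrt_pos.2; positivity
      rw [hg']
      simp only [Real.norm_eq_abs]
      rw [abs_mul, abs_of_pos (by positivity : (0:ℝ) < 1 / Real.sqrt (1 + 2 * f x ^ 2)),
        mul_one_div, div_le_iff₀ hpos]
      have h1 : |2 * f x ^ 1| = Real.sqrt (4 * f x ^ 2) := by
        rw [show (4:ℝ) * f x ^ 2 = (2 * f x ^ 1) ^ 2 by ring, Real.sqrt_sq_eq_abs]
      have h2 : Real.sqrt 2 * Real.sqrt (1 + 2 * f x ^ 2)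
          = Real.sqrt (2 + 4 * f x ^ 2) := by
        rw [← Real.sqrt_mul (by norm_num)]; ring_nf
      rw [h1, h2]
      exact Real.sqrt_le_sqrt (by nlinarith [sq_nonneg (f x)])
    have hmv := (convex_Icc (0:ℝ) t).norm_image_sub_le_of_norm_hasDerivWithin_le
      hgderiv hbound (x := 0) (y := t) ⟨le_refl 0, ht⟩ ⟨ht, le_refl t⟩
    rw [h0] at hmv
    norm_num [Real.norm_eq_abs] at hmv
    calc f t ^ 2 ≤ Real.sqrt 2 * |t| := hmv
    _ = Real.sqrt 2 * t := by rw [abs_of_nonneg ht]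
  -- reduce to nonneg case
  have main : ∀ t : ℝ, 0 ≤ t → |f t| ≤ (2:ℝ) ^ ((1:ℝ)/4) * t ^ ((1:ℝ)/2) := by
    intro t ht
    have h1 : |f t| = Real.sqrt (f t ^ 2) := (Real.sqrt_sq_eq_abs _).symm
    have h2 : Real.sqrt (f t ^ 2) ≤ Real.sqrt (Real.sqrt 2 * t) :=
      Real.sqrt_le_sqrt (key t ht)
    have h3 : Real.sqrt (Real.sqrt 2 * t) = (2:ℝ) ^ ((1:ℝ)/4) * t ^ ((1:ℝ)/2) := by
      rw [Real.sqrt_mul (Real.sqrt_nonneg 2), Real.sqrt_eq_rpow t,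
        Real.sqrt_eq_rpow 2, Real.sqrt_eq_rpow,
        ← Real.rpow_mul (by norm_num : (0:ℝ) ≤ 2)]
      norm_num
    rw [h1, ← h3]; exact h2
  intro t
  rcases le_total 0 t with ht | ht
  · simpa [abs_of_nonneg ht] using main t ht
  · have := main (-t) (by linarith)
    rw [hodd, abs_neg] at this
    simpa [abs_of_nonpos ht] using this
end

section
/- For the dual change of variables f, there exists a constant C > 0 such that |f(t)| ≥ C|t| for |t| ≤ 1 and |f(t)| ≥ C|t|^{1/2} for |t| ≥ 1. -/
open Real Filter Topology Set

private lemma monoIci_aux {g g' : ℝ → ℝ} {a : ℝ} (hg : ∀ x ∈ Ici a, HasDerivAt g (g' x) x)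
    (h' : ∀ x ∈ Ioi a, 0 ≤ g' x) : MonotoneOn g (Ici a) := by
  apply monotoneOn_of_deriv_nonneg (convex_Ici a)
  · exact fun x hx => (hg x hx).continuousAt.continuousWithinAt
  · intro x hx
    rw [interior_Ici] at hx
    exact (hg x (Ioi_subset_Ici_self hx)).differentiableAt.differentiableWithinAt
  · intro x hx
    rw [interior_Ici] at hx
    rw [(hg x (Ioi_subset_Ici_self hx)).deriv]
    exact h' x hx

private lemma monoIcc_aux {g g' : ℝ → ℝ} {a b : ℝ} (hg : ∀ x ∈ Icc a b, HasDerivAt g (g' x) x)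
    (h' : ∀ x ∈ Ioo a b, 0 ≤ g' x) : MonotoneOn g (Icc a b) := by
  apply monotoneOn_of_deriv_nonneg (convex_Icc a b)
  · exact fun x hx => (hg x hx).continuousAt.continuousWithinAt
  · intro x hx
    rw [interior_Icc] at hx
    exact (hg x (Ioo_subset_Icc_self hx)).differentiableAt.differentiableWithinAt
  · intro x hx
    rw [interior_Icc] at hx
    rw [(hg x (Ioo_subset_Icc_self hx)).deriv]
    exact h' x hx

/-- For the dual change of variables `f`, there is `C > 0` with `|f(t)| ≥ C|t|` for
`|t| ≤ 1` and `|f(t)| ≥ C|t|^(1/2)` for `|t| ≥ 1`. -/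
theorem stmt8 (f : ℝ → ℝ) (h0 : f 0 = 0)
    (hderiv : ∀ t : ℝ, 0 ≤ t → HasDerivAt f (1 / Real.sqrt (1 + 2 * f t ^ 2)) t)
    (hodd : ∀ t : ℝ, f (-t) = - f t) :
    ∃ C : ℝ, 0 < C ∧
      (∀ t : ℝ, |t| ≤ 1 → C * |t| ≤ |f t|) ∧
      (∀ t : ℝ, 1 ≤ |t| → C * |t| ^ ((1:ℝ)/2) ≤ |f t|) := by
  have sq_pos : ∀ y : ℝ, 0 < Real.sqrt (1 + 2 * y ^ 2) := fun y =>
    Real.sqrt_pos.2 (by positivity)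
  -- f is monotone on [0, ∞)
  have hmono : MonotoneOn f (Ici 0) := by
    apply monoIci_aux (fun x hx => hderiv x hx)
    intro x _
    positivity
  have hf_nonneg : ∀ t : ℝ, 0 ≤ t → 0 ≤ f t := fun t ht => by
    have := hmono (le_refl (0:ℝ)) ht ht
    rwa [h0] at this
  -- f t ≤ t for t ≥ 0
  have hle : ∀ t : ℝ, 0 ≤ t → f t ≤ t := by
    intro t ht
    have hm : MonotoneOn (fun t => t - f t) (Ici 0) := by
      apply monoIci_aux (g' := fun t => 1 - 1 / Real.sqrt (1 + 2 * f t ^ 2))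
      · intro x hx
        exact (hasDerivAt_id x).sub (hderiv x hx)
      · intro x _
        have hs2 : (Real.sqrt (1 + 2 * f x ^ 2)) ^ 2 = 1 + 2 * f x ^ 2 :=
          Real.sq_sqrt (by positivity)
        have h1 : (1:ℝ) ≤ Real.sqrt (1 + 2 * f x ^ 2) := by
          nlinarith [Real.sqrt_nonneg (1 + 2 * f x ^ 2), sq_nonneg (f x)]
        have := div_le_one_of_le₀ h1 (sq_pos (f x)).le
        linarith
    have := hm (le_refl (0:ℝ)) ht ht
    simp only [h0, sub_zero] at this
    linarith
  -- f t ≥ t / √3 on [0,1]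
  have s3pos : (0:ℝ) < Real.sqrt 3 := Real.sqrt_pos.2 (by norm_num)
  have hlow1 : ∀ t ∈ Icc (0:ℝ) 1, t / Real.sqrt 3 ≤ f t := by
    intro t ht
    have hm : MonotoneOn (fun t => f t - t / Real.sqrt 3) (Icc 0 1) := by
      apply monoIcc_aux (g' := fun t => 1 / Real.sqrt (1 + 2 * f t ^ 2) - 1 / Real.sqrt 3)
      · intro x hx
        exact (hderiv x hx.1).sub ((hasDerivAt_id x).div_const _)
      · intro x hx
        have hfx1 : f x ≤ 1 := le_trans (hle x hx.1.le) hx.2.le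
        have hfx0 : 0 ≤ f x := hf_nonneg x hx.1.le
        have hs : Real.sqrt (1 + 2 * f x ^ 2) ≤ Real.sqrt 3 :=
          Real.sqrt_le_sqrt (by nlinarith)
        have := one_div_le_one_div_of_le (sq_pos (f x)) hs
        linarith
    have := hm (left_mem_Icc.2 (by norm_num)) ht ht.1
    simp only [h0] at this
    have h00 : (0:ℝ) - 0 / Real.sqrt 3 = 0 := by ring
    rw [h00] at this
    linarith
  set a := f 1 with ha_def
  have ha : 1 / Real.sqrt 3 ≤ a := by
    have := hlow1 1 (by norm_num)
    simpa using this
  have ha0 : 0 < a := lt_of_lt_of_le (by positivity) ha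
  set c := 2 * a / Real.sqrt (1 + 2 * a ^ 2) with hc_def
  have hc : 0 < c := by positivity
  -- f t ^ 2 ≥ a ^ 2 + c * (t - 1) for t ≥ 1
  have hG : ∀ t : ℝ, 1 ≤ t → a ^ 2 + c * (t - 1) ≤ f t ^ 2 := by
    intro t ht
    have hm : MonotoneOn (fun t => f t ^ 2 - c * t) (Ici 1) := by
      apply monoIci_aux
        (g' := fun t => 2 * f t ^ 1 * (1 / Real.sqrt (1 + 2 * f t ^ 2)) - c)
      · intro x hx
        have h1 : HasDerivAt (fun t => f t ^ 2)
            ((2:ℕ) * f x ^ 1 * (1 / Real.sqrt (1 + 2 * f x ^ 2))) x := by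
          have := (hderiv x (le_trans zero_le_one hx)).pow 2
          exact this.congr_deriv (by norm_num)
        have h2 : HasDerivAt (fun t => c * t) c x := by
          simpa using (hasDerivAt_id x).const_mul c
        have := h1.sub h2
        exact this.congr_deriv (by push_cast; ring)
      · intro x hx
        have hx1 : (1:ℝ) ≤ x := hx.le
        have hfa : a ≤ f x := hmono (by norm_num) (le_trans zero_le_one hx1) hx1
        set y := f x with hy_def
        set sa := Real.sqrt (1 + 2 * a ^ 2) with hsa_def
        set sy := Real.sqrt (1 + 2 * y ^ 2) with hsy_def
        have hsa0 : 0 < sa := sq_pos a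
        have hsy0 : 0 < sy := sq_pos y
        have hsa2 : sa ^ 2 = 1 + 2 * a ^ 2 := Real.sq_sqrt (by positivity)
        have hsy2 : sy ^ 2 = 1 + 2 * y ^ 2 := Real.sq_sqrt (by positivity)
        -- want: 2a/sa ≤ 2y/sy, i.e. 2a * sy ≤ 2y * sa
        have key : a * sy ≤ y * sa := by
          nlinarith [sq_nonneg (y * sa - a * sy), sq_nonneg (y * sa + a * sy),
            mul_pos hsa0 hsy0, mul_nonneg ha0.le hsy0.le,
            mul_nonneg (le_trans ha0.le hfa) hsa0.le]
        have hcy : c ≤ 2 * y / sy := by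
          rw [hc_def, div_le_div_iff₀ hsa0 hsy0]
          nlinarith
        have : 2 * y ^ 1 * (1 / sy) = 2 * y / sy := by ring
        rw [this]
        linarith
    have := hm (le_refl (1:ℝ) : (1:ℝ) ∈ Ici 1) ht ht
    simp only at this
    nlinarith
  set m := min (a ^ 2) c with hm_def
  have hm0 : 0 < m := lt_min (by positivity) hc
  -- f t ≥ √m * √t for t ≥ 1
  have hlow2 : ∀ t : ℝ, 1 ≤ t → Real.sqrt m * Real.sqrt t ≤ f t := by
    intro t ht
    have h1 : m * t ≤ f t ^ 2 := by
      have := hG t ht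
      have h2 : m ≤ a ^ 2 := min_le_left _ _
      have h3 : m ≤ c := min_le_right _ _
      nlinarith
    calc Real.sqrt m * Real.sqrt t = Real.sqrt (m * t) := (Real.sqrt_mul hm0.le t).symm
      _ ≤ Real.sqrt (f t ^ 2) := Real.sqrt_le_sqrt h1
      _ = f t := by rw [Real.sqrt_sq (hf_nonneg t (le_trans zero_le_one ht))]
  -- reduce to |t| via oddness
  have habs : ∀ t : ℝ, |f t| = f |t| := by
    intro t
    rcases le_or_gt 0 t with h | h
    · rw [abs_of_nonneg h, abs_of_nonneg (hf_nonneg t h)]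
    · have h1 : f (-t) = - f t := hodd t
      have h2 : 0 ≤ f (-t) := hf_nonneg _ (by linarith)
      rw [abs_of_neg h, ← abs_neg (f t), ← h1, abs_of_nonneg h2]
  refine ⟨min (Real.sqrt 3)⁻¹ (Real.sqrt m), lt_min (by positivity) (Real.sqrt_pos.2 hm0), ?_, ?_⟩
  · intro t ht
    rw [habs t]
    have h1 : |t| / Real.sqrt 3 ≤ f |t| := hlow1 |t| ⟨abs_nonneg t, ht⟩
    have h2 : min (Real.sqrt 3)⁻¹ (Real.sqrt m) * |t| ≤ (Real.sqrt 3)⁻¹ * |t| :=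
      mul_le_mul_of_nonneg_right (min_le_left _ _) (abs_nonneg t)
    calc min (Real.sqrt 3)⁻¹ (Real.sqrt m) * |t| ≤ (Real.sqrt 3)⁻¹ * |t| := h2
      _ = |t| / Real.sqrt 3 := by ring
      _ ≤ f |t| := h1
  · intro t ht
    rw [habs t]
    have hrw : |t| ^ ((1:ℝ)/2) = Real.sqrt |t| := (Real.sqrt_eq_rpow |t|).symm
    rw [hrw]
    have h1 : Real.sqrt m * Real.sqrt |t| ≤ f |t| := hlow2 |t| ht
    have h2 : min (Real.sqrt 3)⁻¹ (Real.sqrt m) * Real.sqrt |t| ≤ Real.sqrt m * Real.sqrt |t| :=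
      mul_le_mul_of_nonneg_right (min_le_right _ _) (Real.sqrt_nonneg _)
    linarith
end

section
/- Let m: (0, ∞) → ℝ satisfy m(αa) < α m(a) for all α > 1 whenever the infimum m(a) is attained, and m(αa) ≤ α m(a) in general, with m < 0. If for 0 < a₂ < a₁ either m(a₂) or m(a₁ - a₂) satisfies the strict inequality m(α·) < α m(·) for all α > 1, then m(a₁) < m(a₂) + m(a₁ - a₂). -/
open Real Filter Topology Set

lemma stmt13_aux (m : ℝ → ℝ) (a b : ℝ) (ha : 0 < a) (hb : 0 < b)
    (hhom : ∀ a : ℝ, 0 < a → ∀ α : ℝ, 1 < α → m (α * a) ≤ α * m a)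
    (hstrict : ∀ α : ℝ, 1 < α → m (α * a) < α * m a) :
    m (a + b) < m a + m b := by
  rcases lt_trichotomy b a with h | h | h
  · -- b < a : m(a+b) < ((a+b)/a) m a = m a + (b/a) m a, and (b/a) m a ≤ m b
    have h1 : m ((a + b) / a * a) < (a + b) / a * m a := by
      apply hstrict
      rw [lt_div_iff₀ ha]; linarith
    have h2 : m (a / b * b) ≤ a / b * m b := by
      apply hhom b hb
      rw [lt_div_iff₀ hb]; linarith
    rw [div_mul_cancel₀ _ ha.ne'] at h1
    rw [div_mul_cancel₀ _ hb.ne'] at h2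
    have h2' : m a * b ≤ a * m b := by
      calc m a * b ≤ a / b * m b * b := mul_le_mul_of_nonneg_right h2 hb.le
        _ = a * m b := by field_simp
    have h3 : b / a * m a ≤ m b := by
      rw [div_mul_eq_mul_div, div_le_iff₀ ha]
      linarith [mul_comm (m b) a]
    calc m (a + b) < (a + b) / a * m a := h1
      _ = m a + b / a * m a := by field_simp
      _ ≤ m a + m b := by linarith
  · -- b = a
    rw [h]
    have h1 : m (2 * a) < 2 * m a := hstrict 2 one_lt_two
    have e : (2:ℝ) * a = a + a := by ring
    rw [e] at h1; linarith
  · -- a < b : m(a+b) ≤ ((a+b)/b) m b = m b + (a/b) m b, and (a/b) m b < m a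
    have h1 : m ((a + b) / b * b) ≤ (a + b) / b * m b := by
      apply hhom b hb
      rw [lt_div_iff₀ hb]; linarith
    have h2 : m (b / a * a) < b / a * m a := by
      apply hstrict
      rw [lt_div_iff₀ ha]; linarith
    rw [div_mul_cancel₀ _ hb.ne'] at h1
    rw [div_mul_cancel₀ _ ha.ne'] at h2
    have h2' : m b * a < b * m a := by
      calc m b * a < b / a * m a * a := by
            apply mul_lt_mul_of_pos_right h2 ha
        _ = b * m a := by field_simp
    have h3 : a / b * m b < m a := by
      rw [div_mul_eq_mul_div, div_lt_iff₀ hb]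
      linarith [mul_comm (m b) a, mul_comm (m a) b]
    calc m (a + b) ≤ (a + b) / b * m b := h1
      _ = m b + a / b * m b := by field_simp; ring
      _ < m a + m b := by linarith

/-- Strict subadditivity of `m` when the strict homogeneity inequality holds at `a₂`
or at `a₁ - a₂`. -/
theorem stmt13 (m : ℝ → ℝ) (a₁ a₂ : ℝ) (ha₂ : 0 < a₂) (ha : a₂ < a₁)
    (hhom : ∀ a : ℝ, 0 < a → ∀ α : ℝ, 1 < α → m (α * a) ≤ α * m a)
    (hneg : ∀ a : ℝ, 0 < a → m a < 0)
    (hstrict : (∀ α : ℝ, 1 < α → m (α * a₂) < α * m a₂) ∨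
               (∀ α : ℝ, 1 < α → m (α * (a₁ - a₂)) < α * m (a₁ - a₂))) :
    m a₁ < m a₂ + m (a₁ - a₂) := by
  have hb : 0 < a₁ - a₂ := by linarith
  rcases hstrict with hs | hs
  · have := stmt13_aux m a₂ (a₁ - a₂) ha₂ hb hhom hs
    simpa using this
  · have := stmt13_aux m (a₁ - a₂) a₂ hb ha₂ hhom hs
    have e : a₁ - a₂ + a₂ = a₁ := by ring
    rw [e] at this
    linarith
end
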